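/- arXiv:0810.4796 — 2 statements merged into one kernel-verified Lean document; each statement's English description precedes it below -/
import Mathlib

section
/- In a nice willow graph D, every out-branching of D with the maximum number of leaves is rooted at the top vertex p_n of the stem. -/
universe u

variable {V : Type u}

/-- `T` is an out-tree of the digraph `D` rooted at `r` spanning the vertex set `S`:
an oriented tree with all arcs directed away from the unique root `r`. -/
structure IsOutTreeOn (D : V → V → Prop) (r : V) (S : Set V) (T : V → V → Prop) : Prop where
  sub : ∀ u v, T u v → D u v
  mem_left : ∀ u v, T u v → u ∈ S
  mem_right : ∀ u v, T u v → v ∈ S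
  root_mem : r ∈ S
  no_in_root : ∀ u, ¬ T u r
  unique_parent : ∀ v ∈ S, v ≠ r → ∃! u, T u v
  reach : ∀ v ∈ S, Relation.ReflTransGen T r v

/-- An out-branching of `D` rooted at `r`: a spanning out-tree. -/
def IsOutBranching (D : V → V → Prop) (r : V) (T : V → V → Prop) : Prop :=
  IsOutTreeOn D r Set.univ T

/-- The leaves of an out-tree `T` on vertex set `S`: vertices of out-degree 0. -/
def treeLeaves (T : V → V → Prop) (S : Set V) : Set V :=
  {v ∈ S | ∀ w, ¬ T v w}

def HasOutBranchingWithLeaves (D : V → V → Prop) (r : V) (k : ℕ) : Prop :=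
  ∃ T : V → V → Prop, IsOutBranching D r T ∧ k ≤ (treeLeaves T Set.univ).ncard

def HasOutBranchingOnWithLeaves (D : V → V → Prop) (r : V) (S : Set V) (k : ℕ) : Prop :=
  ∃ T : V → V → Prop, IsOutTreeOn D r S T ∧ k ≤ (treeLeaves T S).ncard

def HasOutTreeWithLeaves (D : V → V → Prop) (k : ℕ) : Prop :=
  ∃ (r : V) (S : Set V) (T : V → V → Prop),
    IsOutTreeOn D r S T ∧ k ≤ (treeLeaves T S).ncard

/-- A (directed) walk in `D` from `a` to `b`, given by its list of vertices. -/
def IsWalk (D : V → V → Prop) (a b : V) (q : List V) : Prop :=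
  q ≠ [] ∧ q.head? = some a ∧ q.getLast? = some b ∧ q.Chain' D

/-- The vertex `u` disconnects `v` from the root `r`:
every directed path from `r` to `v` contains `u`. -/
def VertexDisconnects (D : V → V → Prop) (r u v : V) : Prop :=
  u ≠ v ∧ ∀ q : List V, IsWalk D r v q → u ∈ q

/-- The vertex set `S` disconnects `v` from the root `r`. -/
def SetDisconnects (D : V → V → Prop) (r : V) (S : Set V) (v : V) : Prop :=
  v ∉ S ∧ ∀ q : List V, IsWalk D r v q → ∃ x ∈ S, x ∈ q

/-- The arc `(u, v)` disconnects `w` from the root `r`: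
every directed path from `r` to `w` uses the arc `(u, v)`. -/
def ArcDisconnects (D : V → V → Prop) (r u v w : V) : Prop :=
  ∀ q : List V, IsWalk D r w q → (u, v) ∈ q.zip q.tail

/-- A BFS tree of `D` rooted at `r`: an out-branching together with a level (depth)
function such that `D` has no forward arcs. -/
structure IsBFSTree (D : V → V → Prop) (r : V) (T : V → V → Prop) (depth : V → ℕ) : Prop where
  branching : IsOutBranching D r T
  level : ∀ u v, T u v → depth v = depth u + 1
  root_level : depth r = 0
  no_forward : ∀ u v, D u v → depth v ≤ depth u + 1

/-- Contraction of the arc `(u, v)`: the new vertex is identified with `u`,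
and `v` is removed. -/
def contractArc (D : V → V → Prop) (u v : V) : V → V → Prop :=
  fun a b => a ≠ v ∧ b ≠ v ∧ a ≠ b ∧
    (D a b ∨ (a = u ∧ D v b) ∨ (b = u ∧ D a v))

/-- Reduction Rule 5 (two directional path rule) is applicable to `D`. -/
def Rule5Applicable (D : V → V → Prop) : Prop :=
  ∃ l : ℕ, (l = 7 ∨ l = 8) ∧
    ∃ pp : ℕ → V, Set.InjOn pp (Set.Iio l) ∧
      (∀ i, i + 1 < l → D (pp i) (pp (i + 1))) ∧
      ∃ pin ∈ ({pp (l - 2), pp (l - 1)} : Set V),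
        ∃ pout ∈ ({pp 0, pp 1} : Set V),
          (∀ v ∈ pp '' Set.Iio l, (∃ u, u ∉ pp '' Set.Iio l ∧ D u v) → v = pp 0 ∨ v = pin) ∧
          (∀ v ∈ pp '' Set.Iio l, (∃ u, u ∉ pp '' Set.Iio l ∧ D v u) → v = pp (l - 1) ∨ v = pout) ∧
          IsOutTreeOn D (pp 0) (pp '' Set.Iio l)
            (fun a b => ∃ i, i + 1 < l ∧ a = pp i ∧ b = pp (i + 1)) ∧
          (∀ T : V → V → Prop, IsOutTreeOn D (pp 0) (pp '' Set.Iio l) T →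
            T = fun a b => ∃ i, i + 1 < l ∧ a = pp i ∧ b = pp (i + 1)) ∧
          ∃ Q : V → V → Prop,
            IsOutTreeOn D pin (pp '' Set.Iio l) Q ∧
            (∀ v, {w | Q v w}.ncard ≤ 1) ∧
            (∀ T : V → V → Prop, IsOutTreeOn D pin (pp '' Set.Iio l) T → T = Q) ∧
            (∀ i, i + 1 < l → pout = pp i → ∀ bq, Q (pp (l - 1)) bq → pp (i + 1) ≠ bq)

/-- `D` with root `r` is reduced: none of the five reduction rules applies. -/
structure Reduced (D : V → V → Prop) (r : V) : Prop where
  reach : ∀ v, Relation.ReflTransGen D r v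
  rule2 : ∀ u v, VertexDisconnects D r u v → ¬ D v u
  rule3 : ∀ u v w₁ w₂, D u v → w₁ ≠ w₂ →
    ArcDisconnects D r u v w₁ → ArcDisconnects D r u v w₂ → False
  rule4 : ∀ (S : Set V) (v w : V), S.ncard ≤ 2 → SetDisconnects D r S v →
    (∀ x ∈ S, D x w) → ¬ D v w
  rule5 : ¬ Rule5Applicable D

/-- A nice forest `F` of the path `p 0, p 1, …, p l`, a spanning subforest of
`D[V(P)]` consisting of out-trees rooted at the vertices of `S`. -/
def NiceForest (D : V → V → Prop) (l : ℕ) (p : ℕ → V) (S : Set V)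
    (F : V → V → Prop) : Prop :=
  (∀ u v, F u v → D u v ∧ u ∈ p '' Set.Iic l ∧ v ∈ p '' Set.Iic l) ∧
  (∀ s ∈ S, ∀ u, ¬ F u s) ∧
  (∀ v ∈ p '' Set.Iic l, v ∉ S → ∃! u, F u v) ∧
  (∀ v ∈ p '' Set.Iic l, ∃ s ∈ S, Relation.ReflTransGen F s v) ∧
  (∀ i j, i ≤ l → j ≤ l → i < j → F (p i) (p j) →
    2 ≤ {w | F (p i) w}.ncard ∨ {u | D u (p j)}.ncard = 1) ∧
  (∀ i j, i ≤ l → j ≤ l → j < i → F (p i) (p j) → ∀ q, i < q → q ≤ l → ¬ D (p q) (p j))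

/-- The key vertices of a nice forest `F`: the roots `S`, the leaves of `F`,
the vertices of out-degree at least 2 in `F`, and their children. -/
def keyVertices (l : ℕ) (p : ℕ → V) (S : Set V) (F : V → V → Prop) : Set V :=
  S ∪ treeLeaves F (p '' Set.Iic l) ∪ {v | 2 ≤ {w | F v w}.ncard} ∪
    {v | ∃ u, F u v ∧ 2 ≤ {w | F u w}.ncard}

/-- A nice willow graph with stem `p 0, p 1, …, p (n-1)` (bottom `p 0`, top `p (n-1)`)
and backward-arc set `A2`. -/
structure IsNiceWillow (A2 : V → V → Prop) (n : ℕ) (p : ℕ → V) : Prop where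
  three_le : 3 ≤ n
  inj : Set.InjOn p (Set.Iio n)
  surj : ∀ v, ∃ i < n, p i = v
  backward : ∀ u v, A2 u v → ∃ i j, i < n ∧ j < i ∧ u = p i ∧ v = p j
  unique_source : ∀ i, i + 1 < n → ∃ u, A2 u (p i)
  top_arc1 : A2 (p (n - 1)) (p (n - 2))
  top_arc2 : A2 (p (n - 1)) (p (n - 3))
  only1 : ∀ u v, A2 u v → (u = p (n - 2) ∨ v = p (n - 2)) →
    u = p (n - 1) ∧ v = p (n - 2)
  only2 : ∀ u v, A2 u v → (u = p (n - 3) ∨ v = p (n - 3)) →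
    u = p (n - 1) ∧ v = p (n - 3)
  branch : ∃ T : V → V → Prop, IsOutBranching A2 (p (n - 1)) T

/-- The digraph of a willow: the stem arcs together with the backward arcs `A2`. -/
def willowD (A2 : V → V → Prop) (n : ℕ) (p : ℕ → V) : V → V → Prop :=
  fun a b => (∃ i, i + 1 < n ∧ a = p i ∧ b = p (i + 1)) ∨ A2 a b

/-- Disjoint union of a family of digraphs. -/
def sigmaUnion {ι : Type*} {Vv : ι → Type*} (W : ∀ i, Vv i → Vv i → Prop) :
    (Σ i, Vv i) → (Σ i, Vv i) → Prop :=
  fun x y => ∃ h : y.1 = x.1, W x.1 x.2 (cast (congrArg Vv h) y.2)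

/-- Vertices of the digraph constructed from a Set Cover instance. -/
inductive SCVert (m n : ℕ) : Type
  | root : SCVert m n
  | pv : SCVert m n
  | pv' : SCVert m n
  | s : Fin m → SCVert m n
  | e : Fin n → SCVert m n

/-- Arcs of the digraph constructed from a Set Cover instance. -/
def scArcs (m n : ℕ) (Fam : Fin m → Set (Fin n)) : SCVert m n → SCVert m n → Prop
  | .root, .s _ => True
  | .root, .pv => True
  | .root, .pv' => True
  | .s i, .e j => j ∈ Fam i
  | .e a, .e c => (c : ℕ) + 1 = (a : ℕ)
  | .s a, .s c => (c : ℕ) + 1 = (a : ℕ)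
  | .e a, .s c => (a : ℕ) = 0 ∧ (c : ℕ) + 1 = m
  | .s a, .pv => (a : ℕ) = 0
  | .pv, .pv' => True
  | .pv', .root => True
  | _, _ => False

/-! If `T` is rooted at `p i` with `i < n - 1`, then `T` contains every stem arc above `p i`
(otherwise the parent of some stem vertex would be one of its own descendants higher up the
stem), so the tail `q` of a backward arc `q → p i` is not a leaf of `T`. Re-hanging `p i` below
`q` therefore gives an out-branching rooted at `q` with at least as many leaves, and the root
moves strictly up the stem. Once the root `r` receives an arc from the top `p (n-1)`, hang `r`,
`p (n-2)` and `p (n-3)` below `p (n-1)`: the only out-arcs of `p (n-2)` and `p (n-3)` lead to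
`p (n-1)` and `p (n-2)`, so both become leaves while only `p (n-1)` can stop being one. This is
a strict gain: `p (n-2)` was the parent of `p (n-1)`, and either `p (n-3)` was the parent of
`p (n-2)`, or `p (n-2)` was the root and `p (n-1)` had a child. -/

theorem mem_treeLeaves_univ {T : V → V → Prop} {v : V} :
    v ∈ treeLeaves T Set.univ ↔ ∀ w, ¬ T v w := by
  simp [treeLeaves]

theorem Set.ncard_lt_ncard_of_insert_insert_sdiff_subset {α : Type*} [Finite α]
    {s t : Set α} {a b c : α} (h : insert a (insert b (s \ {c})) ⊆ t) (hab : a ≠ b)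
    (ha : a ∉ s) (hb : b ∉ s) : s.ncard < t.ncard := by
  have hb' : b ∉ s \ {c} := fun hb' => hb hb'.1
  have ha' : a ∉ insert b (s \ {c}) := by
    rintro (rfl | ha')
    exacts [hab rfl, ha ha'.1]
  calc s.ncard < (s \ {c}).ncard + 2 := by
        have := Set.pred_ncard_le_ncard_sdiff_singleton s c
        omega
    _ = (insert a (insert b (s \ {c}))).ncard := by
        rw [Set.ncard_insert_of_notMem ha', Set.ncard_insert_of_notMem hb']
    _ ≤ t.ncard := Set.ncard_le_ncard h

namespace IsOutTreeOn

variable {D T : V → V → Prop} {r : V} {S : Set V}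

theorem parent_unique (hT : IsOutTreeOn D r S T) {u w v : V} (hu : T u v) (hw : T w v) :
    u = w := by
  have hv : v ≠ r := fun h => hT.no_in_root u (h ▸ hu)
  exact (hT.unique_parent v (hT.mem_right u v hu) hv).unique hu hw

theorem not_transGen_self (hT : IsOutTreeOn D r S T) (x : V) : ¬ Relation.TransGen T x x := by
  intro hx
  obtain ⟨y, -, hyx⟩ := Relation.TransGen.tail'_iff.mp hx
  suffices ∀ x, Relation.ReflTransGen T r x → ¬ Relation.TransGen T x x from
    this x (hT.reach x (hT.mem_right y x hyx)) hx
  intro x hrx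
  induction hrx with
  | refl =>
    intro h
    obtain ⟨y, -, hy⟩ := Relation.TransGen.tail'_iff.mp h
    exact hT.no_in_root y hy
  | tail _ hyx ih =>
    intro h
    obtain ⟨z, hxz, hzx⟩ := Relation.TransGen.tail'_iff.mp h
    obtain rfl := hT.parent_unique hzx hyx
    exact ih (Relation.TransGen.head' hyx hxz)

theorem not_reflTransGen_of_arc (hT : IsOutTreeOn D r S T) {u v : V} (huv : T u v) :
    ¬ Relation.ReflTransGen T v u :=
  fun hvu => hT.not_transGen_self u (Relation.TransGen.head' huv hvu)

end IsOutTreeOn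

def regraft (T : V → V → Prop) (S : Set V) (ρ : V) : V → V → Prop :=
  fun x y => (y ∈ S ∧ x = ρ) ∨ (y ∉ S ∧ y ≠ ρ ∧ T x y)

section Regraft

variable {D T : V → V → Prop} {r : V} {S : Set V} {ρ : V}

theorem IsOutBranching.regraft (hT : IsOutBranching D r T) (hρ : ρ ∉ S) (hr : r ∈ S ∨ r = ρ)
    (harc : ∀ y ∈ S, D ρ y) : IsOutBranching D ρ (regraft T S ρ) := by
  refine ⟨?_, fun _ _ _ => Set.mem_univ _, fun _ _ _ => Set.mem_univ _, Set.mem_univ _,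
    ?_, ?_, ?_⟩
  · rintro u v (⟨hvS, rfl⟩ | ⟨-, -, h⟩)
    exacts [harc v hvS, hT.sub u v h]
  · rintro u (⟨hS, -⟩ | ⟨-, hne, -⟩)
    exacts [hρ hS, hne rfl]
  · intro v _ hvρ
    by_cases hvS : v ∈ S
    · refine ⟨ρ, Or.inl ⟨hvS, rfl⟩, ?_⟩
      rintro y (⟨-, rfl⟩ | ⟨h, -, -⟩)
      exacts [rfl, absurd hvS h]
    · have hvr : v ≠ r := by
        rintro rfl
        exact hr.elim hvS hvρ
      obtain ⟨u, hu, huniq⟩ := hT.unique_parent v (Set.mem_univ v) hvr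
      refine ⟨u, Or.inr ⟨hvS, hvρ, hu⟩, ?_⟩
      rintro y (⟨hS, -⟩ | ⟨-, -, h⟩)
      exacts [absurd hS hvS, huniq y h]
  · rintro v -
    induction hT.reach v (Set.mem_univ v) with
    | refl =>
      rcases hr with hr | rfl
      exacts [.single (Or.inl ⟨hr, rfl⟩), .refl]
    | @tail w v _ hwv ih =>
      by_cases hvρ : v = ρ
      · exact hvρ ▸ .refl
      by_cases hvS : v ∈ S
      · exact .single (Or.inl ⟨hvS, rfl⟩)
      exact ih.tail (Or.inr ⟨hvS, hvρ, hwv⟩)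

theorem mem_treeLeaves_regraft_of_ne {v : V} (hv : v ∈ treeLeaves T Set.univ) (hvρ : v ≠ ρ) :
    v ∈ treeLeaves (regraft T S ρ) Set.univ := by
  rw [mem_treeLeaves_univ] at hv ⊢
  rintro w (⟨-, rfl⟩ | ⟨-, -, h⟩)
  exacts [hvρ rfl, hv w h]

theorem mem_treeLeaves_regraft_of_mem {y : V} (hyS : y ∈ S) (hρ : ρ ∉ S)
    (hout : ∀ w, T y w → w ∈ S ∨ w = ρ) : y ∈ treeLeaves (regraft T S ρ) Set.univ := by
  rw [mem_treeLeaves_univ]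
  rintro w (⟨-, rfl⟩ | ⟨hwS, hwρ, h⟩)
  · exact hρ hyS
  · exact (hout w h).elim hwS hwρ

end Regraft

section Willow

variable {A2 : V → V → Prop} {n : ℕ} {p : ℕ → V}

theorem willowD_eq_pred_or_backward (hinj : Set.InjOn p (Set.Iio n)) {u : V} {j : ℕ}
    (hj : j + 1 < n) (hu : willowD A2 n p u (p (j + 1))) : u = p j ∨ A2 u (p (j + 1)) := by
  rcases hu with ⟨i, hi, rfl, he⟩ | ha
  · have : j + 1 = i + 1 := hinj hj hi he
    exact Or.inl (by rw [show i = j by omega])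
  · exact Or.inr ha

theorem willowD_eq_succ_of_forall_not_A2 (hinj : Set.InjOn p (Set.Iio n)) {j : ℕ} {w : V}
    (hj : j < n) (hno : ∀ w, ¬ A2 (p j) w) (hw : willowD A2 n p (p j) w) : w = p (j + 1) := by
  rcases hw with ⟨i, hi, he, rfl⟩ | ha
  · rw [hinj hj (show i < n by omega) he]
  · exact absurd ha (hno w)

theorem exists_lt_of_backward (hinj : Set.InjOn p (Set.Iio n))
    (hback : ∀ u v, A2 u v → ∃ i j, i < n ∧ j < i ∧ u = p i ∧ v = p j) {u : V} {j : ℕ}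
    (hj : j < n) (hu : A2 u (p j)) : ∃ k, j < k ∧ k < n ∧ u = p k := by
  obtain ⟨k, j', hk, hjk, rfl, hv⟩ := hback _ _ hu
  obtain rfl : j = j' := hinj hj (show j' < n by omega) hv
  exact ⟨k, hjk, hk, rfl⟩

section Stem

variable {T : V → V → Prop} {i : ℕ}

theorem stem_arc_of_reflTransGen (hinj : Set.InjOn p (Set.Iio n))
    (hback : ∀ u v, A2 u v → ∃ i j, i < n ∧ j < i ∧ u = p i ∧ v = p j)
    (hT : IsOutBranching (willowD A2 n p) (p i) T) {j : ℕ} (hij : i ≤ j) (hj : j + 1 < n)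
    (hreach : ∀ k, j + 1 ≤ k → k < n → Relation.ReflTransGen T (p (j + 1)) (p k)) :
    T (p j) (p (j + 1)) := by
  have hne : p (j + 1) ≠ p i := (hinj.ne_iff hj (show i < n by omega)).mpr (by omega)
  obtain ⟨u, hu, -⟩ := IsOutTreeOn.unique_parent hT _ (Set.mem_univ _) hne
  rcases willowD_eq_pred_or_backward hinj hj (hT.sub _ _ hu) with rfl | ha
  · exact hu
  · obtain ⟨k, hk, hkn, rfl⟩ := exists_lt_of_backward hinj hback hj ha
    exact absurd (hreach k hk.le hkn) (IsOutTreeOn.not_reflTransGen_of_arc hT hu)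

theorem reflTransGen_stem (hinj : Set.InjOn p (Set.Iio n))
    (hback : ∀ u v, A2 u v → ∃ i j, i < n ∧ j < i ∧ u = p i ∧ v = p j)
    (hT : IsOutBranching (willowD A2 n p) (p i) T) {j : ℕ} (hij : i ≤ j) (hjn : j ≤ n) :
    ∀ k, j ≤ k → k < n → Relation.ReflTransGen T (p j) (p k) := by
  induction hjn using Nat.decreasingInduction with
  | self => intro k hnk hkn; omega
  | of_succ l hl ih =>
    intro k hlk hkn
    rcases hlk.eq_or_lt with rfl | hlk
    · exact .refl
    · exact .head (stem_arc_of_reflTransGen hinj hback hT hij (by omega) (ih (by omega)))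
        (ih (by omega) k hlk hkn)

theorem stem_arc (hinj : Set.InjOn p (Set.Iio n))
    (hback : ∀ u v, A2 u v → ∃ i j, i < n ∧ j < i ∧ u = p i ∧ v = p j)
    (hT : IsOutBranching (willowD A2 n p) (p i) T) {j : ℕ} (hij : i ≤ j) (hj : j + 1 < n) :
    T (p j) (p (j + 1)) :=
  stem_arc_of_reflTransGen hinj hback hT hij hj
    (reflTransGen_stem hinj hback hT (by omega) (by omega))

end Stem

end Willow

namespace IsNiceWillow

variable {A2 : V → V → Prop} {n : ℕ} {p : ℕ → V}

theorem ne_top_of_lt (h : IsNiceWillow A2 n p) {i : ℕ} (hi : i + 1 < n) : p i ≠ p (n - 1) :=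
  (h.inj.ne_iff (show i < n by omega) (show n - 1 < n by omega)).mpr (by omega)

theorem willowD_into_top (h : IsNiceWillow A2 n p) {u : V} (hu : willowD A2 n p u (p (n - 1))) :
    u = p (n - 2) := by
  have := h.three_le
  rw [show n - 1 = n - 2 + 1 by omega] at hu
  refine (willowD_eq_pred_or_backward h.inj (by omega) hu).resolve_right fun ha => ?_
  obtain ⟨k, hk, hkn, -⟩ := exists_lt_of_backward h.inj h.backward (by omega) ha
  omega

theorem willowD_into_second (h : IsNiceWillow A2 n p) {u : V}
    (hu : willowD A2 n p u (p (n - 2))) : u = p (n - 3) ∨ u = p (n - 1) := by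
  have := h.three_le
  rw [show n - 2 = n - 3 + 1 by omega] at hu
  refine (willowD_eq_pred_or_backward h.inj (by omega) hu).imp_right fun ha => ?_
  rw [show n - 3 + 1 = n - 2 by omega] at ha
  exact (h.only1 _ _ ha (Or.inr rfl)).1

theorem willowD_out_of_second (h : IsNiceWillow A2 n p) {w : V}
    (hw : willowD A2 n p (p (n - 2)) w) : w = p (n - 1) := by
  have := h.three_le
  refine (willowD_eq_succ_of_forall_not_A2 h.inj (by omega) (fun w ha => ?_) hw).trans
    (by rw [show n - 2 + 1 = n - 1 by omega])
  exact h.ne_top_of_lt (i := n - 2) (by omega) (h.only1 _ _ ha (Or.inl rfl)).1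

theorem willowD_out_of_third (h : IsNiceWillow A2 n p) {w : V}
    (hw : willowD A2 n p (p (n - 3)) w) : w = p (n - 2) := by
  have := h.three_le
  refine (willowD_eq_succ_of_forall_not_A2 h.inj (by omega) (fun w ha => ?_) hw).trans
    (by rw [show n - 3 + 1 = n - 2 by omega])
  exact h.ne_top_of_lt (i := n - 3) (by omega) (h.only2 _ _ ha (Or.inl rfl)).1

section Branching

variable {T : V → V → Prop} {r : V}

theorem second_top_mem (h : IsNiceWillow A2 n p) (hT : IsOutBranching (willowD A2 n p) r T)
    (hr : r ≠ p (n - 1)) : T (p (n - 2)) (p (n - 1)) := by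
  obtain ⟨u, hu, -⟩ := IsOutTreeOn.unique_parent hT _ (Set.mem_univ _) hr.symm
  rwa [← h.willowD_into_top (hT.sub _ _ hu)]

theorem third_second_mem (h : IsNiceWillow A2 n p) (hT : IsOutBranching (willowD A2 n p) r T)
    (hr : r ≠ p (n - 1)) (hr' : r ≠ p (n - 2)) : T (p (n - 3)) (p (n - 2)) := by
  obtain ⟨u, hu, -⟩ := IsOutTreeOn.unique_parent hT _ (Set.mem_univ _) hr'.symm
  rcases h.willowD_into_second (hT.sub _ _ hu) with rfl | rfl
  · exact hu
  · exact absurd (.single (h.second_top_mem hT hr))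
      (IsOutTreeOn.not_reflTransGen_of_arc hT hu)

-- The path from the root `p (n-2)` to `p (n-3)` has to leave through `p (n-1)`.
theorem exists_top_child (h : IsNiceWillow A2 n p)
    (hT : IsOutBranching (willowD A2 n p) (p (n - 2)) T) : ∃ x, T (p (n - 1)) x := by
  have := h.three_le
  have hne : p (n - 3) ≠ p (n - 2) :=
    (h.inj.ne_iff (show n - 3 < n by omega) (show n - 2 < n by omega)).mpr (by omega)
  rcases (hT.reach (p (n - 3)) (Set.mem_univ _)).cases_head with e | ⟨c, hc, hcb⟩
  · exact absurd e.symm hne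
  obtain rfl := h.willowD_out_of_second (hT.sub _ _ hc)
  rcases hcb.cases_head with e | ⟨x, hx, -⟩
  · exact absurd e (h.ne_top_of_lt (by omega)).symm
  · exact ⟨x, hx⟩

end Branching

theorem exists_top_branching_more_leaves_of_backward_top [Finite V] (h : IsNiceWillow A2 n p)
    {r : V} {T : V → V → Prop} (hT : IsOutBranching (willowD A2 n p) r T) (hr : r ≠ p (n - 1))
    (htr : A2 (p (n - 1)) r) :
    ∃ T', IsOutBranching (willowD A2 n p) (p (n - 1)) T' ∧
      (treeLeaves T Set.univ).ncard < (treeLeaves T' Set.univ).ncard := by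
  have := h.three_le
  set S : Set V := {p (n - 2), p (n - 3), r} with hS
  have htS : p (n - 1) ∉ S := by
    simp only [hS, Set.mem_insert_iff, Set.mem_singleton_iff, not_or]
    exact ⟨(h.ne_top_of_lt (by omega)).symm, (h.ne_top_of_lt (by omega)).symm, hr.symm⟩
  have hT' : IsOutBranching (willowD A2 n p) (p (n - 1)) (regraft T S (p (n - 1))) :=
    hT.regraft htS (by simp [hS]) (by
      rintro y (rfl | rfl | rfl)
      exacts [Or.inr h.top_arc1, Or.inr h.top_arc2, Or.inr htr])
  refine ⟨_, hT', ?_⟩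
  have hsecond : p (n - 2) ∈ treeLeaves (regraft T S (p (n - 1))) Set.univ :=
    mem_treeLeaves_regraft_of_mem (by simp [hS]) htS
      fun w hw => Or.inr (h.willowD_out_of_second (hT.sub _ _ hw))
  have hthird : p (n - 3) ∈ treeLeaves (regraft T S (p (n - 1))) Set.univ :=
    mem_treeLeaves_regraft_of_mem (by simp [hS]) htS
      fun w hw => Or.inl (by simp [hS, h.willowD_out_of_third (hT.sub _ _ hw)])
  have hsecond_old : p (n - 2) ∉ treeLeaves T Set.univ :=
    fun hl => mem_treeLeaves_univ.mp hl _ (h.second_top_mem hT hr)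
  by_cases hra : r = p (n - 2)
  · subst hra
    obtain ⟨x, hx⟩ := h.exists_top_child hT
    refine Set.ncard_lt_ncard ⟨fun v hv => mem_treeLeaves_regraft_of_ne hv ?_,
      fun hsub => hsecond_old (hsub hsecond)⟩
    rintro rfl
    exact mem_treeLeaves_univ.mp hv x hx
  · refine Set.ncard_lt_ncard_of_insert_insert_sdiff_subset (c := p (n - 1)) ?_
      ((h.inj.ne_iff (show n - 2 < n by omega) (show n - 3 < n by omega)).mpr (by omega))
      hsecond_old
      fun hl => mem_treeLeaves_univ.mp hl _ (h.third_second_mem hT hr hra)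
    rintro v (rfl | rfl | ⟨hv, hvt⟩)
    exacts [hsecond, hthird, mem_treeLeaves_regraft_of_ne hv hvt]

theorem exists_top_branching_more_leaves [Finite V] (h : IsNiceWillow A2 n p) {i : ℕ}
    (hi : i + 1 < n) {T : V → V → Prop} (hT : IsOutBranching (willowD A2 n p) (p i) T) :
    ∃ T', IsOutBranching (willowD A2 n p) (p (n - 1)) T' ∧
      (treeLeaves T Set.univ).ncard < (treeLeaves T' Set.univ).ncard := by
  obtain ⟨u, hu⟩ := h.unique_source i hi
  obtain ⟨k, hik, hkn, rfl⟩ := exists_lt_of_backward h.inj h.backward (by omega) hu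
  rcases (show k = n - 1 ∨ k + 1 < n by omega) with rfl | hk
  · exact h.exists_top_branching_more_leaves_of_backward_top hT (h.ne_top_of_lt hi) hu
  have hki : p k ≠ p i :=
    (h.inj.ne_iff (show k < n by omega) (show i < n by omega)).mpr (by omega)
  have hT' : IsOutBranching (willowD A2 n p) (p k) (regraft T {p i} (p k)) :=
    hT.regraft (by simpa using hki) (Or.inl rfl) (by rintro y rfl; exact Or.inr hu)
  have hleaves : treeLeaves T Set.univ ⊆ treeLeaves (regraft T {p i} (p k)) Set.univ := by
    refine fun v hv => mem_treeLeaves_regraft_of_ne hv ?_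
    rintro rfl
    exact mem_treeLeaves_univ.mp hv _ (stem_arc h.inj h.backward hT hik.le hk)
  obtain ⟨T'', hT'', hlt⟩ := h.exists_top_branching_more_leaves hk hT'
  exact ⟨T'', hT'', (Set.ncard_le_ncard hleaves).trans_lt hlt⟩
termination_by n - i

end IsNiceWillow

theorem stmt16 [Fintype V] (A2 : V → V → Prop) (n : ℕ) (p : ℕ → V)
    (h : IsNiceWillow A2 n p)
    (root : V) (T : V → V → Prop)
    (hT : IsOutBranching (willowD A2 n p) root T)
    (hmax : ∀ (root' : V) (T' : V → V → Prop),
      IsOutBranching (willowD A2 n p) root' T' →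
      (treeLeaves T' Set.univ).ncard ≤ (treeLeaves T Set.univ).ncard) :
    root = p (n - 1) := by
  obtain ⟨i, hi, rfl⟩ := h.surj root
  by_contra hne
  have hi' : i + 1 < n := by
    by_contra
    exact hne (by rw [show i = n - 1 by omega])
  obtain ⟨T', hT', hlt⟩ := h.exists_top_branching_more_leaves hi' hT
  exact (hmax _ T' hT').not_gt hlt
end

section
/- Let U be a universe of n elements and F = {S_1,...,S_m} a family of sets covering U, with b <= m - 2. Construct the digraph D with vertices {r, s_1,...,s_m, e_1,...,e_n, p, p'}, arcs from r to each s_i, from s_i to e_j whenever e_j ∈ S_i, arcs (r,p), (r,p'), and stem arcs (e_{i+1}, e_i) for 1 <= i < n, (s_{i+1}, s_i) for 1 <= i < m, (e_1, s_m), (s_1, p), (p, p'), (p', r). Then U has a set cover of size at most b from F if and only if D has an out-branching with at least n + m + 2 - b leaves. -/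
universe u

variable {V : Type u}

/-!
An out-branching of a digraph on `m + n + 3` vertices has `m + n + 3` minus the number of its
internal vertices as leaves, so the claim is that a cover of size at most `b` exists iff some
out-branching has at most `b + 1` internal vertices.

Given a cover, hang `p`, `p'` and every `s i` below `r`, and each `e j` below a chosen set
containing `j`: only `r` and the chosen sets are internal. Conversely, in an out-branching every
`e j` other than its root has as parent either some `s i` with `j ∈ S i`, or `e (j + 1)`. The
internal set vertices, together with one set containing `j` for each `e j` of the second kind and
for the root (if it is an element vertex), form a cover. Its size is at most the number of
internal vertices minus one, since at least one of `r`, `p`, `p'` is internal, and two of them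
are when the root is an element vertex.
-/

section OutTree

variable {D T : V → V → Prop} {r : V} {S : Set V}

def treeInternal (T : V → V → Prop) : Set V :=
  {v | ∃ w, T v w}

lemma treeLeaves_univ (T : V → V → Prop) : treeLeaves T Set.univ = (treeInternal T)ᶜ := by
  ext v
  simp [treeLeaves, treeInternal]

lemma ncard_treeLeaves_univ_add_ncard_treeInternal [Finite V] (T : V → V → Prop) :
    (treeLeaves T Set.univ).ncard + (treeInternal T).ncard = Nat.card V := by
  rw [treeLeaves_univ, add_comm]
  exact Set.ncard_add_ncard_compl _

lemma IsOutTreeOn.exists_parent (hT : IsOutTreeOn D r S T) {v : V} (hv : v ∈ S) (hvr : v ≠ r) :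
    ∃ u, T u v :=
  (hT.unique_parent v hv hvr).exists

lemma IsOutTreeOn.root_mem_treeInternal (hT : IsOutTreeOn D r S T) {v : V} (hv : v ∈ S)
    (hvr : v ≠ r) : r ∈ treeInternal T := by
  rcases (hT.reach v hv).cases_head with rfl | ⟨c, hc, -⟩
  exacts [absurd rfl hvr, ⟨c, hc⟩]

end OutTree

namespace SCVert

variable {m n : ℕ}

def equivSum : SCVert m n ≃ Unit ⊕ Unit ⊕ Unit ⊕ Fin m ⊕ Fin n where
  toFun
    | .root => .inl ()
    | .pv => .inr (.inl ())
    | .pv' => .inr (.inr (.inl ()))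
    | .s i => .inr (.inr (.inr (.inl i)))
    | .e j => .inr (.inr (.inr (.inr j)))
  invFun
    | .inl _ => .root
    | .inr (.inl _) => .pv
    | .inr (.inr (.inl _)) => .pv'
    | .inr (.inr (.inr (.inl i))) => .s i
    | .inr (.inr (.inr (.inr j))) => .e j
  left_inv v := by cases v <;> rfl
  right_inv x := by rcases x with _ | _ | _ | i | j <;> rfl

instance : Finite (SCVert m n) :=
  Finite.of_equiv _ equivSum.symm

lemma natCard : Nat.card (SCVert m n) = m + n + 3 := by
  rw [Nat.card_congr equivSum, Nat.card_eq_fintype_card]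
  simp only [Fintype.card_sum, Fintype.card_unit, Fintype.card_fin]
  omega

lemma s_injective : Function.Injective (s : Fin m → SCVert m n) :=
  fun _ _ h => s.inj h

lemma e_injective : Function.Injective (e : Fin n → SCVert m n) :=
  fun _ _ h => e.inj h

/-- The vertices `r`, `p`, `p'` of the construction. -/
def special : Set (SCVert m n) :=
  {root, pv, pv'}

lemma ncard_preimage_s_add_ncard_preimage_e_add (I : Set (SCVert m n)) :
    (s ⁻¹' I).ncard + (e ⁻¹' I).ncard + (I ∩ special).ncard = I.ncard := by
  rw [← Set.ncard_image_of_injective _ s_injective, ← Set.ncard_image_of_injective _ e_injective,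
    ← Set.ncard_union_eq, ← Set.ncard_union_eq]
  · congr 1
    ext v
    cases v <;> simp [special]
  · refine Set.disjoint_left.2 ?_
    rintro _ (⟨i, -, rfl⟩ | ⟨j, -, rfl⟩) ⟨-, h⟩ <;> simp [special] at h
  · refine Set.disjoint_left.2 ?_
    rintro _ ⟨i, -, rfl⟩ ⟨j, -, h⟩
    cases h

end SCVert

open SCVert

section Construction

variable {m n : ℕ} {Fam : Fin m → Set (Fin n)}

def coverTree (f : Fin n → Fin m) : SCVert m n → SCVert m n → Prop
  | .root, .s _ => True
  | .root, .pv => True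
  | .root, .pv' => True
  | .s i, .e j => f j = i
  | _, _ => False

lemma coverTree_isOutBranching {f : Fin n → Fin m} (hf : ∀ j, j ∈ Fam (f j)) :
    IsOutBranching (scArcs m n Fam) .root (coverTree f) := by
  refine ⟨?_, fun _ _ _ => trivial, fun _ _ _ => trivial, trivial, ?_, ?_, ?_⟩
  · rintro (_ | _ | _ | _ | _) (_ | _ | _ | _ | j) h <;> simp only [coverTree, scArcs] at h ⊢
    exact h ▸ hf j
  · rintro (_ | _ | _ | _ | _) <;> simp [coverTree]
  · rintro (_ | _ | _ | i | j) - h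
    · exact absurd rfl h
    all_goals try exact ⟨.root, trivial, fun u hu => by cases u <;> simp_all [coverTree]⟩
    exact ⟨.s (f j), rfl, fun u hu => by cases u <;> simp_all [coverTree]⟩
  · rintro (_ | _ | _ | i | j) -
    · exact .refl
    · exact .single trivial
    · exact .single trivial
    · exact .single trivial
    · exact .head (b := SCVert.s (f j)) trivial (.single (rfl : f j = f j))

lemma ncard_treeInternal_coverTree_le {f : Fin n → Fin m} {C : Set (Fin m)}
    (hfC : ∀ j, f j ∈ C) : (treeInternal (coverTree f)).ncard ≤ C.ncard + 1 := by
  have hsub : treeInternal (coverTree f) ⊆ insert .root (s '' C) := by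
    rintro (_ | _ | _ | i | _) ⟨(_ | _ | _ | _ | j), h⟩ <;> simp_all [coverTree]
    exact h ▸ hfC j
  calc (treeInternal (coverTree f)).ncard ≤ (insert .root (s '' C)).ncard := Set.ncard_le_ncard hsub
    _ ≤ (s '' C).ncard + 1 := Set.ncard_insert_le _ _
    _ = C.ncard + 1 := by rw [Set.ncard_image_of_injective _ s_injective]

lemma scArcs_to_root {u : SCVert m n} (h : scArcs m n Fam u .root) : u = .pv' := by
  cases u <;> simp_all [scArcs]

lemma scArcs_to_pv' {u : SCVert m n} (h : scArcs m n Fam u .pv') : u = .root ∨ u = .pv := by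
  cases u <;> simp_all [scArcs]

lemma scArcs_to_e {u : SCVert m n} {j : Fin n} (h : scArcs m n Fam u (.e j)) :
    (∃ i, u = .s i ∧ j ∈ Fam i) ∨ ∃ k : Fin n, u = .e k ∧ (j : ℕ) + 1 = k := by
  cases u <;> simp_all [scArcs]

end Construction

section Backward

variable {m n : ℕ} {Fam : Fin m → Set (Fin n)} {r : SCVert m n} {T : SCVert m n → SCVert m n → Prop}

lemma ncard_stemChildren_le (hT : IsOutBranching (scArcs m n Fam) r T) :
    {j : Fin n | ∃ k, T (.e k) (.e j)}.ncard ≤ (e ⁻¹' treeInternal T).ncard := by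
  refine (Set.ncard_le_ncard_of_injOn (t := Fin.val '' (e ⁻¹' treeInternal T))
    (fun j : Fin n => (j : ℕ) + 1) ?_ ?_).trans_eq (Set.ncard_image_of_injective _ Fin.val_injective)
  · rintro j ⟨k, hk⟩
    obtain ⟨i, hi, -⟩ | ⟨k', hk', hjk⟩ := scArcs_to_e (hT.sub _ _ hk)
    · cases hi
    · exact ⟨k, ⟨_, hk⟩, (e.inj hk').symm ▸ hjk.symm⟩
  · intro a _ b _ h
    exact Fin.ext (Nat.succ_injective h)

/-- The parent of `p'` (or `p'` itself, when it is the root of `T`) is an internal special vertex;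
when the root of `T` is an element vertex, `r` has parent `p'`, so `p'` and its parent are two of
them. -/
lemma ncard_setOf_eq_e_add_one_le (hT : IsOutBranching (scArcs m n Fam) r T) :
    {j | r = .e j}.ncard + 1 ≤ (treeInternal T ∩ special).ncard := by
  have parent_pv' (h : (.pv' : SCVert m n) ≠ r) :
      ∃ u, T u .pv' ∧ u ∈ treeInternal T ∩ special ∧ u ≠ .pv' := by
    obtain ⟨u, hu⟩ := hT.exists_parent trivial h
    rcases scArcs_to_pv' (hT.sub _ _ hu) with rfl | rfl
    · exact ⟨_, hu, ⟨⟨_, hu⟩, by simp [special]⟩, by simp⟩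
    · exact ⟨_, hu, ⟨⟨_, hu⟩, by simp [special]⟩, by simp⟩
  by_cases hr : ∃ j, r = .e j
  · obtain ⟨j, rfl⟩ := hr
    have hj : {j' | (e j : SCVert m n) = e j'} = {j} := by ext; simp [eq_comm]
    obtain ⟨u, hu⟩ := hT.exists_parent (v := .root) trivial (by simp)
    obtain rfl := scArcs_to_root (hT.sub _ _ hu)
    obtain ⟨w, -, hw, hw'⟩ := parent_pv' (by simp)
    rw [hj, Set.ncard_singleton]
    refine (Set.ncard_pair hw'.symm).symm.le.trans (Set.ncard_le_ncard ?_)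
    exact Set.insert_subset ⟨⟨_, hu⟩, by simp [special]⟩ (Set.singleton_subset_iff.2 hw)
  · push Not at hr
    have : {j | r = .e j} = ∅ := Set.eq_empty_of_forall_notMem hr
    rw [this, Set.ncard_empty]
    refine (Set.ncard_pos).2 ?_
    by_cases hpr : (.pv' : SCVert m n) = r
    · subst hpr
      exact ⟨_, hT.root_mem_treeInternal (v := .pv) trivial (by simp), by simp [special]⟩
    · obtain ⟨w, -, hw, -⟩ := parent_pv' hpr
      exact ⟨w, hw⟩

lemma exists_cover_of_isOutBranching (hcov : ∀ j, ∃ i, j ∈ Fam i)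
    (hT : IsOutBranching (scArcs m n Fam) r T) {b : ℕ} (hI : (treeInternal T).ncard ≤ b + 1) :
    ∃ C : Set (Fin m), C.ncard ≤ b ∧ ∀ j, ∃ i ∈ C, j ∈ Fam i := by
  choose pick hpick using hcov
  set B := {j : Fin n | ∃ k, T (.e k) (.e j)} ∪ {j | r = .e j}
  refine ⟨s ⁻¹' treeInternal T ∪ pick '' B, ?_, fun j => ?_⟩
  · have hB : B.ncard ≤ _ := Set.ncard_union_le _ _
    have := Set.ncard_union_le (s ⁻¹' treeInternal T) (pick '' B)
    have := Set.ncard_image_le (f := pick) (s := B)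
    have := ncard_stemChildren_le hT
    have := ncard_setOf_eq_e_add_one_le hT
    have := ncard_preimage_s_add_ncard_preimage_e_add (treeInternal T)
    omega
  by_cases hj : r = .e j
  · exact ⟨pick j, Or.inr ⟨j, Or.inr hj, rfl⟩, hpick j⟩
  obtain ⟨u, hu⟩ := hT.exists_parent trivial (Ne.symm hj)
  obtain ⟨i, rfl, hi⟩ | ⟨k, rfl, -⟩ := scArcs_to_e (hT.sub _ _ hu)
  · exact ⟨i, Or.inl ⟨_, hu⟩, hi⟩
  · exact ⟨pick j, Or.inr ⟨j, Or.inl ⟨k, hu⟩, rfl⟩, hpick j⟩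

end Backward

theorem stmt17_general (m n b : ℕ) (Fam : Fin m → Set (Fin n))
    (hcov : ∀ j, ∃ i, j ∈ Fam i) :
    (∃ C : Set (Fin m), C.ncard ≤ b ∧ ∀ j, ∃ i ∈ C, j ∈ Fam i) ↔
    (∃ (root : SCVert m n) (T : SCVert m n → SCVert m n → Prop),
      IsOutBranching (scArcs m n Fam) root T ∧
      n + m + 2 - b ≤ (treeLeaves T Set.univ).ncard) := by
  constructor
  · rintro ⟨C, hCb, hC⟩
    choose f hfC hf using hC
    refine ⟨.root, coverTree f, coverTree_isOutBranching hf, ?_⟩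
    have := ncard_treeInternal_coverTree_le (n := n) hfC
    have := ncard_treeLeaves_univ_add_ncard_treeInternal (coverTree f)
    rw [natCard] at this
    omega
  · rintro ⟨r, T, hT, hleaves⟩
    have := ncard_treeLeaves_univ_add_ncard_treeInternal T
    rw [natCard] at this
    exact exists_cover_of_isOutBranching hcov hT (by omega)

theorem stmt17 (m n b : ℕ) (hn : 0 < n) (Fam : Fin m → Set (Fin n))
    (hcov : ∀ j, ∃ i, j ∈ Fam i) (hb : b + 2 ≤ m) :
    (∃ C : Set (Fin m), C.ncard ≤ b ∧ ∀ j, ∃ i ∈ C, j ∈ Fam i) ↔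
    (∃ (root : SCVert m n) (T : SCVert m n → SCVert m n → Prop),
      IsOutBranching (scArcs m n Fam) root T ∧
      n + m + 2 - b ≤ (treeLeaves T Set.univ).ncard) :=
  stmt17_general m n b Fam hcov
end
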